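/- Let A be an h-skew-adjoint ℂ-linear endomorphism of ℂ^{n+1}. Then there exist no real numbers λ₁, λ₂ and vectors e₁, f₁, e₂, f₂ ∈ ℂ^{n+1} with e₁, e₂ ℂ-linearly independent such that A e_j = iλ_j·e_j and A f_j = iλ_j·f_j + e_j for j = 1, 2; i.e. A has at most one Jordan block of size 2 for purely imaginary eigenvalues. -/

import Mathlib

open Complex

/-- The standard hermitian form of signature `(n,1)` on `ℂ^{n+1}`. -/
noncomputable def hForm (n : ℕ) (x y : Fin (n+1) → ℂ) : ℂ :=
  (∑ i : Fin n, x i.castSucc * (starRingEnd ℂ) (y i.castSucc))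
    - x (Fin.last n) * (starRingEnd ℂ) (y (Fin.last n))

/-- An endomorphism of `ℂ^{n+1}` is `h`-skew-adjoint if
`h(Ax,y) + h(x,Ay) = 0` for all `x, y`. -/
def IsHSkewAdjoint (n : ℕ) (A : (Fin (n+1) → ℂ) →ₗ[ℂ] (Fin (n+1) → ℂ)) : Prop :=
  ∀ x y : Fin (n+1) → ℂ, hForm n (A x) y + hForm n x (A y) = 0

/-!
The eigenvector `e` of a Jordan chain `A e = μ e`, `A f = μ f + e` of a skew-adjoint `A` with
`μ` purely imaginary is `h`-orthogonal to every eigenvector `e'` of `A`: pairing `e'` with `f`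
and with `e` gives `(μ' - μ) h(e', f) + h(e', e) = 0` and `(μ' - μ) h(e', e) = 0`, which force
`h(e', e) = 0`. Two independent such vectors would thus span a totally isotropic plane, but a
totally isotropic subspace for a form of signature `(n, 1)` is at most a line: it meets the
positive definite hyperplane `{x_{n+1} = 0}` only in `0`.
-/

lemma hForm_add_left (n : ℕ) (x x' y : Fin (n+1) → ℂ) :
    hForm n (x + x') y = hForm n x y + hForm n x' y := by
  simp only [hForm, Pi.add_apply, add_mul, Finset.sum_add_distrib]
  ring

lemma hForm_add_right (n : ℕ) (x y y' : Fin (n+1) → ℂ) :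
    hForm n x (y + y') = hForm n x y + hForm n x y' := by
  simp only [hForm, Pi.add_apply, map_add, mul_add, Finset.sum_add_distrib]
  ring

lemma hForm_smul_left (n : ℕ) (c : ℂ) (x y : Fin (n+1) → ℂ) :
    hForm n (c • x) y = c * hForm n x y := by
  simp only [hForm, Pi.smul_apply, smul_eq_mul, mul_sub, Finset.mul_sum, mul_assoc]

lemma hForm_smul_right (n : ℕ) (c : ℂ) (x y : Fin (n+1) → ℂ) :
    hForm n x (c • y) = starRingEnd ℂ c * hForm n x y := by
  simp only [hForm, Pi.smul_apply, smul_eq_mul, map_mul, mul_sub, Finset.mul_sum]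
  congr 1
  · exact Finset.sum_congr rfl fun _ _ => by ring
  · ring

lemma eq_zero_of_hForm_self_eq_zero_of_last_eq_zero (n : ℕ) {x : Fin (n+1) → ℂ}
    (hxx : hForm n x x = 0) (hlast : x (Fin.last n) = 0) : x = 0 := by
  have hsum : ∑ i : Fin n, normSq (x i.castSucc) = 0 := by
    exact_mod_cast (by simpa [hForm, hlast, mul_conj] using hxx :
      ∑ i : Fin n, (normSq (x i.castSucc) : ℂ) = 0)
  have hinit : ∀ i : Fin n, x i.castSucc = 0 := fun i =>
    normSq_eq_zero.mp <| (Finset.sum_eq_zero_iff_of_nonneg fun i _ => normSq_nonneg _).mp hsum i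
      (Finset.mem_univ i)
  funext i
  induction i using Fin.lastCases with
  | last => exact hlast
  | cast j => exact hinit j

lemma not_linearIndependent_of_hForm_eq_zero (n : ℕ) {x y : Fin (n+1) → ℂ}
    (hxx : hForm n x x = 0) (hxy : hForm n x y = 0) (hyx : hForm n y x = 0)
    (hyy : hForm n y y = 0) : ¬ LinearIndependent ℂ ![x, y] := by
  intro hind
  set a := y (Fin.last n)
  set b := -x (Fin.last n)
  have hv : a • x + b • y = 0 := by
    refine eq_zero_of_hForm_self_eq_zero_of_last_eq_zero n ?_ ?_
    · simp only [hForm_add_left, hForm_add_right, hForm_smul_left, hForm_smul_right,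
        hxx, hxy, hyx, hyy]
      ring
    · simp only [Pi.add_apply, Pi.smul_apply, smul_eq_mul, a, b]
      ring
  have hx_last : x (Fin.last n) = 0 := neg_eq_zero.mp (LinearIndependent.pair_iff.mp hind a b hv).2
  have hx : x = 0 := eq_zero_of_hForm_self_eq_zero_of_last_eq_zero n hxx hx_last
  exact one_ne_zero (LinearIndependent.pair_iff.mp hind 1 0 (by simp [hx])).1

lemma IsHSkewAdjoint.hForm_eq_zero_of_jordan_chain {n : ℕ}
    {A : (Fin (n+1) → ℂ) →ₗ[ℂ] (Fin (n+1) → ℂ)} (hA : IsHSkewAdjoint n A) {μ μ' : ℂ}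
    {e' e f : Fin (n+1) → ℂ} (he' : A e' = μ' • e') (he : A e = μ • e) (hf : A f = μ • f + e)
    (hμ : starRingEnd ℂ μ = -μ) : hForm n e' e = 0 := by
  have hee := hA e' e
  have hef := hA e' f
  rw [he', he, hForm_smul_left, hForm_smul_right, hμ] at hee
  rw [he', hf, hForm_smul_left, hForm_add_right, hForm_smul_right, hμ] at hef
  exact mul_self_eq_zero.mp <| by
    linear_combination hForm n e' e * hef - hForm n e' f * hee

theorem at_most_one_jordan_block_size_two_general (n : ℕ)
    (A : (Fin (n+1) → ℂ) →ₗ[ℂ] (Fin (n+1) → ℂ)) (hA : IsHSkewAdjoint n A) :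
    ¬ ∃ (lam₁ lam₂ : ℝ) (e₁ f₁ e₂ f₂ : Fin (n+1) → ℂ),
        LinearIndependent ℂ ![e₁, e₂] ∧
        A e₁ = (Complex.I * (lam₁ : ℂ)) • e₁ ∧
        A f₁ = (Complex.I * (lam₁ : ℂ)) • f₁ + e₁ ∧
        A e₂ = (Complex.I * (lam₂ : ℂ)) • e₂ ∧
        A f₂ = (Complex.I * (lam₂ : ℂ)) • f₂ + e₂ := by
  rintro ⟨lam₁, lam₂, e₁, f₁, e₂, f₂, hind, he₁, hf₁, he₂, hf₂⟩
  have hconj (lam : ℝ) : starRingEnd ℂ (I * lam) = -(I * lam) := by simp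
  have orth := @hA.hForm_eq_zero_of_jordan_chain
  exact not_linearIndependent_of_hForm_eq_zero n
    (orth he₁ he₁ hf₁ (hconj lam₁)) (orth he₁ he₂ hf₂ (hconj lam₂))
    (orth he₂ he₁ hf₁ (hconj lam₁)) (orth he₂ he₂ hf₂ (hconj lam₂)) hind

/-- an `h`-skew-adjoint endomorphism has at most one Jordan
block of size `2` for purely imaginary eigenvalues: there are no two chains
`A eⱼ = iλⱼ eⱼ`, `A fⱼ = iλⱼ fⱼ + eⱼ` (`j = 1, 2`) with `e₁, e₂`
linearly independent. -/
theorem at_most_one_jordan_block_size_two (n : ℕ) (hn : 1 ≤ n)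
    (A : (Fin (n+1) → ℂ) →ₗ[ℂ] (Fin (n+1) → ℂ)) (hA : IsHSkewAdjoint n A) :
    ¬ ∃ (lam₁ lam₂ : ℝ) (e₁ f₁ e₂ f₂ : Fin (n+1) → ℂ),
        LinearIndependent ℂ ![e₁, e₂] ∧
        A e₁ = (Complex.I * (lam₁ : ℂ)) • e₁ ∧
        A f₁ = (Complex.I * (lam₁ : ℂ)) • f₁ + e₁ ∧
        A e₂ = (Complex.I * (lam₂ : ℂ)) • e₂ ∧
        A f₂ = (Complex.I * (lam₂ : ℂ)) • f₂ + e₂ :=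
  at_most_one_jordan_block_size_two_general n A hA
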